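/- arXiv:1112.3205 — 8 statements merged into one kernel-verified Lean document; each statement's English description precedes it below -/
import Mathlib

section
/- For a fixed positive real number b ≠ 1 and positive integer r, the function g_b(y_1,...,y_r) = Σ_{k=1}^r Σ_{i=k}^r Π_{j=k}^i b^{-y_j} is strictly convex on ℝ^r. -/
/-!
Every summand `∏_{j=k}^i b^{-y_j}` equals `b` raised to a linear form in `y`, hence is convex.
The diagonal summands `k = i` add up to `∑_j b^{-y_j}`, which is strictly convex because
`t ↦ b^{-t} = (b⁻¹)^t` is strictly convex for `b ≠ 1`; a strictly convex function plus a convex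
one is strictly convex.
-/

open Finset

section
variable {𝕜 ι : Type*} [Semiring 𝕜] [PartialOrder 𝕜] {β : Type*} [AddCommMonoid β]
  [PartialOrder β] [Module 𝕜 β]

theorem convexOn_finset_sum {E : Type*} [AddCommMonoid E] [SMul 𝕜 E] [IsOrderedAddMonoid β]
    {s : Set E} {f : ι → E → β} (hs : Convex 𝕜 s) (t : Finset ι)
    (hf : ∀ i ∈ t, ConvexOn 𝕜 s (f i)) :
    ConvexOn 𝕜 s (fun x => ∑ i ∈ t, f i x) := by
  classical
  induction t using Finset.induction_on with
  | empty => exact convexOn_const 0 hs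
  | insert i t hi ih =>
    simp only [sum_insert hi]
    exact (hf i (mem_insert_self i t)).add (ih fun j hj => hf j (mem_insert_of_mem hj))

theorem strictConvexOn_pi_sum [Fintype ι] [IsOrderedCancelAddMonoid β] {E : ι → Type*}
    [∀ i, AddCommMonoid (E i)] [∀ i, Module 𝕜 (E i)] {s : ∀ i, Set (E i)} {f : ∀ i, E i → β}
    (hf : ∀ i, StrictConvexOn 𝕜 (s i) (f i)) :
    StrictConvexOn 𝕜 (Set.univ.pi s) (fun x => ∑ i, f i (x i)) := by
  refine ⟨convex_pi fun i _ => (hf i).1, fun x hx y hy hxy a b ha hb hab => ?_⟩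
  obtain ⟨j, hj⟩ := Function.ne_iff.mp hxy
  simp only [Set.mem_univ_pi] at hx hy
  rw [smul_sum, smul_sum, ← sum_add_distrib]
  exact sum_lt_sum (fun i _ => (hf i).convexOn.2 (hx i) (hy i) ha.le hb.le hab)
    ⟨j, mem_univ j, (hf j).2 (hx j) (hy j) hj ha hb hab⟩

end

theorem Finset.sum_sum_ite_le_eq_sum_add_sum_sum_ite_lt {ι M : Type*} [Fintype ι]
    [LinearOrder ι] [AddCommMonoid M] (P : ι → ι → M) :
    ∑ k, ∑ i, (if k ≤ i then P k i else 0) =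
      ∑ k, P k k + ∑ k, ∑ i, (if k < i then P k i else 0) := by
  rw [← sum_add_distrib]
  refine sum_congr rfl fun k _ => ?_
  have hsplit : ∀ i, (if k ≤ i then P k i else 0) =
      (if k = i then P k i else 0) + (if k < i then P k i else 0) := by
    intro i
    rcases lt_trichotomy k i with h | rfl | h
    · simp [h, h.le, h.ne]
    · simp
    · simp [h.not_ge, h.not_gt, h.ne']
  rw [sum_congr rfl fun i _ => hsplit i, sum_add_distrib, sum_ite_eq, if_pos (mem_univ k)]

theorem strictConvexOn_rpow_left {b : ℝ} (hb : 0 < b) (hb1 : b ≠ 1) :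
    StrictConvexOn ℝ Set.univ (fun x : ℝ => b ^ x) := by
  refine ⟨convex_univ, fun x _ y _ hxy a c ha hc hac => ?_⟩
  have hlog : Real.log b ≠ 0 := Real.log_ne_zero_of_pos_of_ne_one hb hb1
  simp only [Real.rpow_def_of_pos hb, smul_eq_mul]
  have hexp := strictConvexOn_exp.2 (Set.mem_univ (Real.log b * x))
    (Set.mem_univ (Real.log b * y)) (by simpa [hlog] using hxy) ha hc hac
  convert hexp using 2 <;> simp only [smul_eq_mul]
  ring

theorem convexOn_prod_rpow_neg {ι : Type*} {b : ℝ} (hb : 0 < b) (s : Finset ι) :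
    ConvexOn ℝ Set.univ (fun y : ι → ℝ => ∏ j ∈ s, b ^ (-y j)) := by
  have hprod : (fun y : ι → ℝ => ∏ j ∈ s, b ^ (-y j)) =
      (b ^ ·) ∘ (-∑ j ∈ s, LinearMap.proj j : (ι → ℝ) →ₗ[ℝ] ℝ) := by
    funext y
    simp [← Real.rpow_sum_of_pos hb]
  rw [hprod]
  exact (convexOn_rpow_left hb).comp_linearMap _

theorem strictConvex_g_general (b : ℝ) (hb : 0 < b) (hb1 : b ≠ 1) (r : ℕ) :
    StrictConvexOn ℝ (Set.univ : Set (Fin r → ℝ))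
      (fun y : Fin r → ℝ =>
        ∑ k : Fin r, ∑ i : Fin r,
          if k ≤ i then ∏ j ∈ Finset.Icc k i, b ^ (-(y j)) else 0) := by
  simp_rw [sum_sum_ite_le_eq_sum_add_sum_sum_ite_lt, Icc_self, prod_singleton]
  refine StrictConvexOn.add_convexOn ?_ ?_
  · have hdiag := strictConvexOn_pi_sum fun _ : Fin r =>
      strictConvexOn_rpow_left (inv_pos.2 hb) (inv_ne_one.2 hb1)
    simpa [Set.pi_univ, Real.inv_rpow hb.le, Real.rpow_neg hb.le] using hdiag
  · refine convexOn_finset_sum convex_univ _ fun k _ =>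
      convexOn_finset_sum convex_univ _ fun i _ => ?_
    split_ifs
    · exact convexOn_prod_rpow_neg hb _
    · exact convexOn_const 0 convex_univ

theorem strictConvex_g (b : ℝ) (hb : 0 < b) (hb1 : b ≠ 1) (r : ℕ) (hr : 0 < r) :
    StrictConvexOn ℝ (Set.univ : Set (Fin r → ℝ))
      (fun y : Fin r → ℝ =>
        ∑ k : Fin r, ∑ i : Fin r,
          if k ≤ i then ∏ j ∈ Finset.Icc k i, b ^ (-(y j)) else 0) :=
  strictConvex_g_general b hb hb1 r
end

section
/- Let p be a prime and s ≥ 2 an integer. The minimum of h_p(a_1,a_2,a_3) = p^{-(a_2-a_1)} + p^{-(a_3-a_1)} + p^{-(a_3-a_2)} over all integers 0 ≤ a_1 < a_2 < a_3 ≤ s equals p^{-⌊s/2⌋} + p^{-s} + p^{-(s-⌊s/2⌋)}, attained only for a_1 = 0, a_3 = s, and a_2 = ⌊s/2⌋ (or additionally a_2 = ⌊s/2⌋+1 when s is odd). -/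
/-!
Write `d = a₂ - a₁`. Since `a₃ - a₁ ≤ s`, lengthening the outer gap to exactly `s` can only
decrease `h`, which leaves `q^(-d) + q^(-s) + q^(d-s)`. With `x = q^(-d)`, `y = q^(d-s)` and
`A = q^(-m)`, `B = q^(m-s)` we have `xy = AB`, hence `x (x + y - A - B) = (x - A)(x - B)`, which
is nonnegative unless `x` lies strictly between `B` and `A`, i.e. unless `m < d < s - m`.
For `m = ⌊s/2⌋` no integer `d` lies there, and equality forces `x ∈ {A, B}`.
-/

noncomputable def gapSum (q : ℝ) (a₁ a₂ a₃ : ℤ) : ℝ :=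
  q ^ (a₁ - a₂) + q ^ (a₁ - a₃) + q ^ (a₂ - a₃)

lemma zpow_neg_mul_sub_eq {q : ℝ} (hq : q ≠ 0) (d m s : ℤ) :
    q ^ (-d) * ((q ^ (-d) + q ^ (d - s)) - (q ^ (-m) + q ^ (m - s))) =
      (q ^ (-d) - q ^ (-m)) * (q ^ (-d) - q ^ (m - s)) := by
  have hd : q ^ (-d) * q ^ (d - s) = q ^ (-s) := by rw [← zpow_add₀ hq]; ring_nf
  have hm : q ^ (-m) * q ^ (m - s) = q ^ (-s) := by rw [← zpow_add₀ hq]; ring_nf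
  linear_combination hd - hm

lemma zpow_neg_add_zpow_sub_le {q : ℝ} (hq : 1 < q) {d m s : ℤ} (hms : 2 * m ≤ s)
    (hd : d ≤ m ∨ s - m ≤ d) :
    q ^ (-m) + q ^ (m - s) ≤ q ^ (-d) + q ^ (d - s) := by
  have hprod : 0 ≤ (q ^ (-d) - q ^ (-m)) * (q ^ (-d) - q ^ (m - s)) := by
    rcases hd with hd | hd
    · exact mul_nonneg (sub_nonneg.2 (zpow_le_zpow_right₀ hq.le (by omega)))
        (sub_nonneg.2 (zpow_le_zpow_right₀ hq.le (by omega)))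
    · exact mul_nonneg_of_nonpos_of_nonpos
        (sub_nonpos.2 (zpow_le_zpow_right₀ hq.le (by omega)))
        (sub_nonpos.2 (zpow_le_zpow_right₀ hq.le (by omega)))
  rw [← zpow_neg_mul_sub_eq (by positivity) d m s] at hprod
  exact sub_nonneg.1 (nonneg_of_mul_nonneg_right hprod (by positivity))

lemma eq_or_eq_sub_of_zpow_neg_add_zpow_sub_eq {q : ℝ} (hq : 1 < q) {d m s : ℤ}
    (h : q ^ (-d) + q ^ (d - s) = q ^ (-m) + q ^ (m - s)) :
    d = m ∨ d = s - m := by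
  have hprod := zpow_neg_mul_sub_eq (by positivity : q ≠ 0) d m s
  rw [h, sub_self, mul_zero, eq_comm, mul_eq_zero, sub_eq_zero, sub_eq_zero,
    (zpow_right_strictMono₀ hq).injective.eq_iff,
    (zpow_right_strictMono₀ hq).injective.eq_iff] at hprod
  omega

lemma gapSum_ge {q : ℝ} (hq : 1 < q) {s a₁ a₂ a₃ : ℤ} (h₁ : 0 ≤ a₁) (h₃ : a₃ ≤ s) :
    q ^ (a₁ - a₂) + q ^ (-s) + q ^ (a₂ - a₁ - s) ≤ gapSum q a₁ a₂ a₃ := by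
  have hout : q ^ (-s) ≤ q ^ (a₁ - a₃) := zpow_le_zpow_right₀ hq.le (by omega)
  have hin : q ^ (a₂ - a₁ - s) ≤ q ^ (a₂ - a₃) := zpow_le_zpow_right₀ hq.le (by omega)
  unfold gapSum
  linarith

lemma eq_zero_and_eq_of_gapSum_eq {q : ℝ} (hq : 1 < q) {s a₁ a₂ a₃ : ℤ} (h₁ : 0 ≤ a₁)
    (h₃ : a₃ ≤ s) (h : gapSum q a₁ a₂ a₃ = q ^ (a₁ - a₂) + q ^ (-s) + q ^ (a₂ - a₁ - s)) :
    a₁ = 0 ∧ a₃ = s := by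
  have hout : q ^ (-s) ≤ q ^ (a₁ - a₃) := zpow_le_zpow_right₀ hq.le (by omega)
  have hin : q ^ (a₂ - a₁ - s) ≤ q ^ (a₂ - a₃) := zpow_le_zpow_right₀ hq.le (by omega)
  have hout_eq : q ^ (a₁ - a₃) = q ^ (-s) := by unfold gapSum at h; linarith
  have := (zpow_right_strictMono₀ hq).injective hout_eq
  omega

lemma gapSum_ge_of_two_mul_le {q : ℝ} (hq : 1 < q) {s m a₁ a₂ a₃ : ℤ} (hms : 2 * m ≤ s)
    (hsm : s ≤ 2 * m + 1) (h₁ : 0 ≤ a₁) (h₃ : a₃ ≤ s) :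
    q ^ (-m) + q ^ (-s) + q ^ (m - s) ≤ gapSum q a₁ a₂ a₃ := by
  have hsplit := zpow_neg_add_zpow_sub_le hq (d := a₂ - a₁) hms (by omega)
  have hgap := gapSum_ge (a₂ := a₂) hq h₁ h₃
  rw [neg_sub] at hsplit
  linarith

lemma eq_of_gapSum_eq_of_two_mul_le {q : ℝ} (hq : 1 < q) {s m a₁ a₂ a₃ : ℤ} (hms : 2 * m ≤ s)
    (hsm : s ≤ 2 * m + 1) (h₁ : 0 ≤ a₁) (h₃ : a₃ ≤ s)
    (h : gapSum q a₁ a₂ a₃ = q ^ (-m) + q ^ (-s) + q ^ (m - s)) :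
    a₁ = 0 ∧ a₃ = s ∧ (a₂ = m ∨ a₂ = s - m) := by
  have hsplit := zpow_neg_add_zpow_sub_le hq (d := a₂ - a₁) hms (by omega)
  have hgap := gapSum_ge (a₂ := a₂) hq h₁ h₃
  rw [neg_sub] at hsplit
  obtain ⟨rfl, rfl⟩ := eq_zero_and_eq_of_gapSum_eq hq h₁ h₃ (by linarith)
  simp only [sub_zero, zero_sub] at hsplit hgap
  exact ⟨rfl, rfl, eq_or_eq_sub_of_zpow_neg_add_zpow_sub_eq hq (by linarith)⟩

theorem m_p_s_three (p : ℕ) (hp : p.Prime) (s : ℕ) (hs : 2 ≤ s) :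
    IsLeast {x : ℝ | ∃ a₁ a₂ a₃ : ℤ, 0 ≤ a₁ ∧ a₁ < a₂ ∧ a₂ < a₃ ∧ a₃ ≤ (s : ℤ) ∧
        x = (p : ℝ) ^ (a₁ - a₂) + (p : ℝ) ^ (a₁ - a₃) + (p : ℝ) ^ (a₂ - a₃)}
      ((p : ℝ) ^ (-((s / 2 : ℕ) : ℤ)) + (p : ℝ) ^ (-(s : ℤ)) +
        (p : ℝ) ^ (-((s : ℤ) - ((s / 2 : ℕ) : ℤ)))) ∧
    ∀ a₁ a₂ a₃ : ℤ, 0 ≤ a₁ → a₁ < a₂ → a₂ < a₃ → a₃ ≤ (s : ℤ) →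
      (p : ℝ) ^ (a₁ - a₂) + (p : ℝ) ^ (a₁ - a₃) + (p : ℝ) ^ (a₂ - a₃) =
        (p : ℝ) ^ (-((s / 2 : ℕ) : ℤ)) + (p : ℝ) ^ (-(s : ℤ)) +
          (p : ℝ) ^ (-((s : ℤ) - ((s / 2 : ℕ) : ℤ))) →
      a₁ = 0 ∧ a₃ = (s : ℤ) ∧
        (a₂ = ((s / 2 : ℕ) : ℤ) ∨ (Odd s ∧ a₂ = ((s / 2 : ℕ) : ℤ) + 1)) := by
  have hq : 1 < (p : ℝ) := by exact_mod_cast hp.one_lt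
  have hms : 2 * ((s / 2 : ℕ) : ℤ) ≤ s := by omega
  have hsm : (s : ℤ) ≤ 2 * ((s / 2 : ℕ) : ℤ) + 1 := by omega
  rw [neg_sub]
  refine ⟨⟨⟨0, s / 2, s, le_rfl, by omega, by omega, le_rfl, by simp⟩, ?_⟩, ?_⟩
  · rintro x ⟨a₁, a₂, a₃, h₁, -, -, h₃, rfl⟩
    exact gapSum_ge_of_two_mul_le hq hms hsm h₁ h₃
  · intro a₁ a₂ a₃ h₁ _ _ h₃ h
    obtain ⟨rfl, rfl, ha₂⟩ := eq_of_gapSum_eq_of_two_mul_le hq hms hsm h₁ h₃ h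
    refine ⟨rfl, rfl, ?_⟩
    rcases Nat.even_or_odd s with heven | hodd
    · exact .inl (by rcases heven with ⟨k, rfl⟩; omega)
    · exact ha₂.imp_right fun h ↦ ⟨hodd, by rcases hodd with ⟨k, rfl⟩; omega⟩
end

section
/- For a prime p and real σ > 0, the minimum of h_p(α_1, α_2, α_3) = p^{-(α_2-α_1)} + p^{-(α_3-α_1)} + p^{-(α_3-α_2)} over real 0 ≤ α_1 ≤ α_2 ≤ α_3 ≤ σ equals p^{-σ} + 2·p^{-σ/2}, uniquely attained at α_1 = 0, α_2 = σ/2, α_3 = σ. -/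
/-!
Put `u = p^(α₁-α₂)`, `v = p^(α₂-α₃)` and `s = p^(-σ/2)`. Then `h_p = u + v + uv`, and
`α₃ - α₁ ≤ σ` gives `uv ≥ s²`, hence also `u + v ≥ 2√(uv) ≥ 2s` by AM-GM. So `h_p ≥ s² + 2s`,
and equality forces `uv = s²` and `u = v`, i.e. `u = v = s`, which pins down the exponents.
-/

section AMGM

variable {u v s : ℝ}

lemma two_mul_le_add_of_mul_self_le_mul (hu : 0 ≤ u) (hv : 0 ≤ v)
    (h : s * s ≤ u * v) : 2 * s ≤ u + v := by
  nlinarith [sq_nonneg (u - v), sq_nonneg (u + v - 2 * s)]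

lemma mul_self_add_two_mul_le (hu : 0 ≤ u) (hv : 0 ≤ v) (h : s * s ≤ u * v) :
    s * s + 2 * s ≤ u + v + u * v := by
  linarith [two_mul_le_add_of_mul_self_le_mul hu hv h]

lemma eq_of_add_add_mul_eq (hu : 0 ≤ u) (hv : 0 ≤ v) (h : s * s ≤ u * v)
    (heq : u + v + u * v = s * s + 2 * s) : u = s ∧ v = s := by
  have h2s := two_mul_le_add_of_mul_self_le_mul hu hv h
  have hprod : u * v = s * s := by linarith
  have hsum : u + v = 2 * s := by linarith
  have hdiff : (u - v) ^ 2 = 0 := by nlinarith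
  have huv : u = v := by linarith [pow_eq_zero_iff two_ne_zero |>.mp hdiff]
  constructor <;> linarith

end AMGM

section ThreePoints

variable {t σ α₁ α₂ α₃ : ℝ}

lemma rpow_sub_eq_mul (ht : 0 < t) : t ^ (α₁ - α₃) = t ^ (α₁ - α₂) * t ^ (α₂ - α₃) := by
  rw [← Real.rpow_add ht]; ring_nf

lemma rpow_neg_eq_mul_self (ht : 0 < t) : t ^ (-σ) = t ^ (-(σ / 2)) * t ^ (-(σ / 2)) := by
  rw [← Real.rpow_add ht]; ring_nf

lemma rpow_neg_le_mul (ht : 1 < t) (h0 : 0 ≤ α₁) (h3 : α₃ ≤ σ) :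
    t ^ (-(σ / 2)) * t ^ (-(σ / 2)) ≤ t ^ (α₁ - α₂) * t ^ (α₂ - α₃) := by
  rw [← rpow_neg_eq_mul_self (by linarith), ← rpow_sub_eq_mul (by linarith)]
  exact (Real.rpow_le_rpow_left_iff ht).mpr (by linarith)

lemma rpow_neg_add_two_mul_le (ht : 1 < t) (h0 : 0 ≤ α₁) (h3 : α₃ ≤ σ) :
    t ^ (-σ) + 2 * t ^ (-(σ / 2)) ≤ t ^ (α₁ - α₂) + t ^ (α₁ - α₃) + t ^ (α₂ - α₃) := by
  have ht0 : 0 < t := by linarith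
  rw [rpow_neg_eq_mul_self ht0, rpow_sub_eq_mul (α₁ := α₁) (α₂ := α₂) (α₃ := α₃) ht0]
  linarith [mul_self_add_two_mul_le
    (Real.rpow_nonneg ht0.le (α₁ - α₂)) (Real.rpow_nonneg ht0.le (α₂ - α₃))
    (rpow_neg_le_mul ht h0 h3)]

lemma eq_of_rpow_add_eq (ht : 1 < t) (h0 : 0 ≤ α₁) (h3 : α₃ ≤ σ)
    (heq : t ^ (α₁ - α₂) + t ^ (α₁ - α₃) + t ^ (α₂ - α₃) = t ^ (-σ) + 2 * t ^ (-(σ / 2))) :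
    α₁ = 0 ∧ α₂ = σ / 2 ∧ α₃ = σ := by
  have ht0 : 0 < t := by linarith
  rw [rpow_neg_eq_mul_self ht0, rpow_sub_eq_mul (α₁ := α₁) (α₂ := α₂) (α₃ := α₃) ht0,
    add_right_comm] at heq
  obtain ⟨hu, hv⟩ := eq_of_add_add_mul_eq
    (Real.rpow_nonneg ht0.le (α₁ - α₂)) (Real.rpow_nonneg ht0.le (α₂ - α₃))
    (rpow_neg_le_mul ht h0 h3) heq
  rw [Real.rpow_right_inj ht0 ht.ne'] at hu hv
  exact ⟨by linarith, by linarith, by linarith⟩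

end ThreePoints

theorem mtilde_p_sigma_three (p : ℕ) (hp : p.Prime) (σ : ℝ) (hσ : 0 < σ) :
    IsLeast {x : ℝ | ∃ α₁ α₂ α₃ : ℝ, 0 ≤ α₁ ∧ α₁ ≤ α₂ ∧ α₂ ≤ α₃ ∧ α₃ ≤ σ ∧
        x = (p : ℝ) ^ (α₁ - α₂) + (p : ℝ) ^ (α₁ - α₃) + (p : ℝ) ^ (α₂ - α₃)}
      ((p : ℝ) ^ (-σ) + 2 * (p : ℝ) ^ (-(σ / 2))) ∧
    ∀ α₁ α₂ α₃ : ℝ, 0 ≤ α₁ → α₁ ≤ α₂ → α₂ ≤ α₃ → α₃ ≤ σ →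
      (p : ℝ) ^ (α₁ - α₂) + (p : ℝ) ^ (α₁ - α₃) + (p : ℝ) ^ (α₂ - α₃) =
        (p : ℝ) ^ (-σ) + 2 * (p : ℝ) ^ (-(σ / 2)) →
      α₁ = 0 ∧ α₂ = σ / 2 ∧ α₃ = σ := by
  have hp1 : (1 : ℝ) < p := by exact_mod_cast hp.one_lt
  refine ⟨⟨⟨0, σ / 2, σ, le_rfl, by linarith, by linarith, le_rfl, ?_⟩, ?_⟩, ?_⟩
  · rw [zero_sub, zero_sub, show σ / 2 - σ = -(σ / 2) by ring]
    ring
  · rintro _ ⟨α₁, α₂, α₃, h0, -, -, h3, rfl⟩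
    exact rpow_neg_add_two_mul_le hp1 h0 h3
  · intro α₁ α₂ α₃ h0 _ _ h3 heq
    exact eq_of_rpow_add_eq hp1 h0 h3 heq
end

section
/- Let r ≥ 3 be an integer, 0 < ρ ≤ 2^{-r}, let ν ∈ (0,1) be the unique solution of x^r = ρ(1-x)^2, and set μ = ν/(1-ν). Then the point (μ, ν, ..., ν, μ) ∈ (0,1)^r (with r-2 middle coordinates equal to ν) satisfies the constraint x_1·x_2···x_r = ρ, and f(μ, ν, ..., ν, μ) = (r + μ)·μ, where f(x_1,...,x_r) = Σ_{k=1}^r Σ_{i=k}^r Π_{j=k}^i x_j. -/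
/-!
Write `T k = ∑_{i ≥ k} ∏_{j=k}^{i} x j` for the tail sums of `f`, so that `f = ∑_k T k` and
`T k = x k * (1 + T (k + 1))`. At `x = (μ, ν, …, ν, μ)` the last tail is `μ`, and `μ` is a fixed
point of `t ↦ ν (1 + t)` because `ν (1 + μ) = μ`; hence every tail but the first equals `μ`, the
first is `μ (1 + μ)`, and `f = μ (1 + μ) + (r - 1) μ = (r + μ) μ`. The product is
`μ² ν^(r-2) = ν^r / (1 - ν)² = ρ`, and `ρ ≤ 2^(-r)` forces `ν < 1/2`, i.e. `μ < 1`.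
-/

open Finset

section
variable {R : Type*} [CommSemiring R]

def tailSum (x : ℕ → R) (k n : ℕ) : R := ∑ i ∈ Ico k n, ∏ j ∈ Icc k i, x j

theorem tailSum_eq_mul_one_add {x : ℕ → R} {k n : ℕ} (h : k < n) :
    tailSum x k n = x k * (1 + tailSum x (k + 1) n) := by
  have hprod : ∀ i ∈ Ico (k + 1) n, ∏ j ∈ Icc k i, x j = x k * ∏ j ∈ Icc (k + 1) i, x j :=
    fun i hi => by
      rw [← mul_prod_Ioc_eq_prod_Icc (by grind), Icc_add_one_left_eq_Ioc]
  rw [tailSum, sum_eq_sum_Ico_succ_bot h, sum_congr rfl hprod, ← mul_sum, Icc_self,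
    prod_singleton, tailSum, mul_one_add]

theorem sum_fin_ite_le_prod_Icc_eq_sum_tailSum (x : ℕ → R) (n : ℕ) :
    (∑ k : Fin n, ∑ i : Fin n, if k ≤ i then ∏ j ∈ Icc k i, x j else 0) =
      ∑ k ∈ range n, tailSum x k n := by
  rw [← Fin.sum_univ_eq_sum_range]
  refine sum_congr rfl fun k _ => ?_
  rw [tailSum, ← sum_filter, filter_le_eq_Ici, ← Fin.map_valEmbedding_Ici, sum_map]
  refine sum_congr rfl fun i _ => ?_
  rw [Fin.valEmbedding_apply, ← Fin.map_valEmbedding_Icc, prod_map]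
  rfl

def endpointSeq (n : ℕ) (a b : R) (j : ℕ) : R := if j = 0 ∨ j = n - 1 then b else a

theorem prod_range_endpointSeq {n : ℕ} (hn : 2 ≤ n) (a b : R) :
    ∏ j ∈ range n, endpointSeq n a b j = b ^ 2 * a ^ (n - 2) := by
  obtain ⟨m, rfl⟩ := Nat.exists_eq_add_of_le' hn
  have hmid : ∀ i ∈ range m, endpointSeq (m + 2) a b (i + 1) = a := fun i hi => by
    simp only [endpointSeq, mem_range] at hi ⊢
    grind
  rw [prod_range_succ, prod_range_succ', prod_congr rfl hmid, prod_const, card_range,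
    endpointSeq, if_pos (Or.inl rfl), endpointSeq, if_pos (Or.inr (by omega)), Nat.add_sub_cancel]
  ring

theorem tailSum_endpointSeq {a b : R} (hab : a * (1 + b) = b) {k n : ℕ} (hk : 1 ≤ k)
    (hkn : k < n) : tailSum (endpointSeq n a b) k n = b := by
  have hkn' : k ≤ n - 1 := by omega
  induction hkn' using Nat.decreasingInduction with
  | self =>
    rw [tailSum_eq_mul_one_add (by omega), Nat.sub_add_cancel (by omega), tailSum, Ico_self,
      sum_empty, endpointSeq, if_pos (Or.inr rfl), add_zero, mul_one]
  | of_succ k hk' ih =>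
    rw [tailSum_eq_mul_one_add hkn, ih (by omega) (by omega), endpointSeq, if_neg (by omega), hab]

theorem sum_range_tailSum_endpointSeq {a b : R} (hab : a * (1 + b) = b) {n : ℕ} (hn : 2 ≤ n) :
    ∑ k ∈ range n, tailSum (endpointSeq n a b) k n = (n + b) * b := by
  have hfirst : tailSum (endpointSeq n a b) 0 n = b * (1 + b) := by
    rw [tailSum_eq_mul_one_add (by omega), tailSum_endpointSeq hab le_rfl (by omega), endpointSeq,
      if_pos (Or.inl rfl)]
  obtain ⟨m, rfl⟩ := Nat.exists_eq_add_of_le' (by omega : 1 ≤ n)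
  have hrest : ∀ k ∈ range m, tailSum (endpointSeq (m + 1) a b) (k + 1) (m + 1) = b :=
    fun k hk => tailSum_endpointSeq hab (by omega) (by grind)
  rw [sum_range_succ', hfirst, sum_congr rfl hrest, sum_const, card_range, nsmul_eq_mul]
  push_cast
  ring

end

theorem lt_half_of_pow_eq_mul_one_sub_sq {r : ℕ} (hr : r ≠ 0) {ρ ν : ℝ} (hρ : ρ ≤ (1 / 2) ^ r)
    (hν : ν ∈ Set.Ioo (0 : ℝ) 1) (h : ν ^ r = ρ * (1 - ν) ^ 2) : ν < 1 / 2 := by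
  obtain ⟨hν0, hν1⟩ := hν
  have hsq : (1 - ν) ^ 2 < 1 := by nlinarith
  refine (pow_lt_pow_iff_left₀ hν0.le (by norm_num) hr).mp ?_
  calc ν ^ r = ρ * (1 - ν) ^ 2 := h
    _ ≤ (1 / 2) ^ r * (1 - ν) ^ 2 := by gcongr
    _ < (1 / 2) ^ r := mul_lt_of_lt_one_right (by positivity) hsq

theorem div_one_sub_mem_Ioo {ν : ℝ} (h0 : 0 < ν) (h : ν < 1 / 2) :
    ν / (1 - ν) ∈ Set.Ioo (0 : ℝ) 1 :=
  ⟨div_pos h0 (by linarith), (div_lt_one (by linarith)).mpr (by linarith)⟩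

theorem mul_one_add_div_one_sub {ν : ℝ} (h : 1 - ν ≠ 0) :
    ν * (1 + ν / (1 - ν)) = ν / (1 - ν) := by
  field_simp
  ring

theorem critical_point_eval_general (r : ℕ) (hr : 3 ≤ r) (ρ ν : ℝ)
    (hρ1 : ρ ≤ (1 / 2) ^ r)
    (hν : ν ∈ Set.Ioo (0 : ℝ) 1) (hνeq : ν ^ r = ρ * (1 - ν) ^ 2) :
    (∀ j : Fin r,
        (if j.val = 0 ∨ j.val = r - 1 then ν / (1 - ν) else ν) ∈ Set.Ioo (0 : ℝ) 1) ∧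
    (∏ j : Fin r, (if j.val = 0 ∨ j.val = r - 1 then ν / (1 - ν) else ν)) = ρ ∧
    (∑ k : Fin r, ∑ i : Fin r,
        if k ≤ i then
          ∏ j ∈ Finset.Icc k i, (if j.val = 0 ∨ j.val = r - 1 then ν / (1 - ν) else ν)
        else 0) = ((r : ℝ) + ν / (1 - ν)) * (ν / (1 - ν)) := by
  have hνhalf := lt_half_of_pow_eq_mul_one_sub_sq (by omega) hρ1 hν hνeq
  obtain ⟨hν0, hν1⟩ := hν
  have hne : 1 - ν ≠ 0 := by linarith
  refine ⟨fun j => ?_, ?_, ?_⟩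
  · split_ifs
    · exact div_one_sub_mem_Ioo hν0 hνhalf
    · exact ⟨hν0, hν1⟩
  · refine (Fin.prod_univ_eq_prod_range (endpointSeq r ν (ν / (1 - ν))) r).trans ?_
    obtain ⟨m, rfl⟩ := Nat.exists_eq_add_of_le' (by omega : 2 ≤ r)
    rw [prod_range_endpointSeq (by omega), Nat.add_sub_cancel, div_pow, div_mul_eq_mul_div,
      ← pow_add, add_comm, hνeq, mul_div_cancel_right₀ _ (pow_ne_zero 2 hne)]
  · exact (sum_fin_ite_le_prod_Icc_eq_sum_tailSum (endpointSeq r ν (ν / (1 - ν))) r).trans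
      (sum_range_tailSum_endpointSeq (mul_one_add_div_one_sub hne) (by omega))

theorem critical_point_eval (r : ℕ) (hr : 3 ≤ r) (ρ ν : ℝ)
    (hρ0 : 0 < ρ) (hρ1 : ρ ≤ (1 / 2) ^ r)
    (hν : ν ∈ Set.Ioo (0 : ℝ) 1) (hνeq : ν ^ r = ρ * (1 - ν) ^ 2) :
    (∀ j : Fin r,
        (if j.val = 0 ∨ j.val = r - 1 then ν / (1 - ν) else ν) ∈ Set.Ioo (0 : ℝ) 1) ∧
    (∏ j : Fin r, (if j.val = 0 ∨ j.val = r - 1 then ν / (1 - ν) else ν)) = ρ ∧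
    (∑ k : Fin r, ∑ i : Fin r,
        if k ≤ i then
          ∏ j ∈ Finset.Icc k i, (if j.val = 0 ∨ j.val = r - 1 then ν / (1 - ν) else ν)
        else 0) = ((r : ℝ) + ν / (1 - ν)) * (ν / (1 - ν)) :=
  critical_point_eval_general r hr ρ ν hρ1 hν hνeq
end

section
/- Let r ≥ 1 be an integer and 0 < ρ ≤ 2^{-r}. Then min { f(x_1,...,x_r) : (x_1,...,x_r) ∈ [0,1]^r, x_1·x_2···x_r = ρ } = (r + μ)·μ, where μ = ν/(1-ν) and ν is the unique solution in (0,1) of x^r = ρ(1-x)^2; moreover the minimizer is unique. -/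
/-!
Write `P x (k, i) = x_k ⋯ x_i`, so that `f x = ∑ P x (k, i)` over the intervals `k ≤ i`. The
candidate `y = (μ, ν, …, ν, μ)` has the property that the intervals containing a coordinate `j`
carry total weight `∑_{(k, i) ∋ j} P y (k, i) = ν / (1 - ν) ^ 2`, independently of `j`. Weighted
AM-GM with weights `P y (k, i) / f y` applied to the ratios `P x (k, i) / P y (k, i)` therefore gives
`f x / f y ≥ ∏_j (x_j / y_j) ^ const = 1` whenever `∏ x = ∏ y`. Equality in AM-GM forces every ratio
to be `1`, in particular on the singleton intervals, so `x = y`. Finally `ρ ≤ 2⁻ʳ` forces `ν < 1/2`,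
which puts `y` in the cube.
-/

open Finset

section MarginalAMGM

variable {ι τ : Type*} {T : Finset τ} {s : τ → Finset ι} {x y : ι → ℝ} {E : ℝ}

theorem sum_div_mul_div_eq_sum_div (hy : ∀ j, 0 < y j) (F : ℝ) :
    ∑ t ∈ T, (∏ j ∈ s t, y j) / F * ((∏ j ∈ s t, x j) / ∏ j ∈ s t, y j) =
      (∑ t ∈ T, ∏ j ∈ s t, x j) / F := by
  rw [sum_div]
  refine sum_congr rfl fun t _ => ?_
  field_simp [(prod_pos fun j _ => hy j : 0 < ∏ j ∈ s t, y j).ne']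

variable [Fintype ι] [DecidableEq ι]

theorem prod_prod_rpow_eq_prod_rpow_sum {q : ι → ℝ}
    (hq : ∀ j, 0 ≤ q j) {w : τ → ℝ} (hw : ∀ t ∈ T, 0 ≤ w t) :
    ∏ t ∈ T, (∏ j ∈ s t, q j) ^ w t = ∏ j, q j ^ ∑ t ∈ T with j ∈ s t, w t := by
  calc ∏ t ∈ T, (∏ j ∈ s t, q j) ^ w t
      = ∏ t ∈ T, ∏ j, if j ∈ s t then q j ^ w t else 1 := by
        refine prod_congr rfl fun t _ => ?_
        rw [← Real.finsetProd_rpow _ _ (fun j _ => hq j), ← prod_filter, filter_mem_eq_inter,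
          univ_inter]
    _ = ∏ j, q j ^ ∑ t ∈ T with j ∈ s t, w t := by
        rw [prod_comm]
        refine prod_congr rfl fun j _ => ?_
        rw [← prod_filter, Real.rpow_sum_of_nonneg (hq j) fun t ht => hw t (mem_filter.1 ht).1]

theorem prod_div_rpow_eq_one (hy : ∀ j, 0 < y j) (hx : ∀ j, 0 ≤ x j)
    (hprod : ∏ j, x j = ∏ j, y j)
    (hmarg : ∀ j, ∑ t ∈ T with j ∈ s t, ∏ i ∈ s t, y i = E) {F : ℝ} (hF : 0 ≤ F) :
    ∏ t ∈ T, ((∏ j ∈ s t, x j) / ∏ j ∈ s t, y j) ^ ((∏ j ∈ s t, y j) / F) = 1 := by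
  have hq : ∀ j, 0 ≤ x j / y j := fun j => div_nonneg (hx j) (hy j).le
  simp_rw [← prod_div_distrib]
  rw [prod_prod_rpow_eq_prod_rpow_sum hq fun t _ =>
    div_nonneg (prod_nonneg fun j _ => (hy j).le) hF]
  simp_rw [← sum_div, hmarg]
  rw [Real.finsetProd_rpow _ _ (fun j _ => hq j), prod_div_distrib, hprod,
    div_self (prod_pos fun j _ => hy j).ne', Real.one_rpow]

theorem sum_prod_le_of_marginal_eq (hy : ∀ j, 0 < y j) (hx : ∀ j, 0 ≤ x j)
    (hprod : ∏ j, x j = ∏ j, y j)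
    (hmarg : ∀ j, ∑ t ∈ T with j ∈ s t, ∏ i ∈ s t, y i = E) :
    ∑ t ∈ T, ∏ j ∈ s t, y j ≤ ∑ t ∈ T, ∏ j ∈ s t, x j := by
  rcases T.eq_empty_or_nonempty with rfl | hT
  · simp
  have hPy : ∀ t, 0 < ∏ j ∈ s t, y j := fun t => prod_pos fun j _ => hy j
  have hF : 0 < ∑ t ∈ T, ∏ j ∈ s t, y j := sum_pos (fun t _ => hPy t) hT
  have amgm := Real.geom_mean_le_arith_mean_weighted T
    (fun t => (∏ j ∈ s t, y j) / ∑ t ∈ T, ∏ j ∈ s t, y j)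
    (fun t => (∏ j ∈ s t, x j) / ∏ j ∈ s t, y j)
    (fun t _ => div_nonneg (hPy t).le hF.le) (by rw [← sum_div, div_self hF.ne'])
    (fun t _ => div_nonneg (prod_nonneg fun j _ => hx j) (hPy t).le)
  rw [prod_div_rpow_eq_one hy hx hprod hmarg hF.le, sum_div_mul_div_eq_sum_div hy] at amgm
  exact (one_le_div hF).1 amgm

theorem prod_eq_of_sum_prod_eq (hy : ∀ j, 0 < y j) (hx : ∀ j, 0 ≤ x j)
    (hprod : ∏ j, x j = ∏ j, y j)
    (hmarg : ∀ j, ∑ t ∈ T with j ∈ s t, ∏ i ∈ s t, y i = E)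
    (hsum : ∑ t ∈ T, ∏ j ∈ s t, x j = ∑ t ∈ T, ∏ j ∈ s t, y j) :
    ∀ t ∈ T, ∏ j ∈ s t, x j = ∏ j ∈ s t, y j := by
  intro t ht
  have hPy : ∀ t, 0 < ∏ j ∈ s t, y j := fun t => prod_pos fun j _ => hy j
  have hF : 0 < ∑ t ∈ T, ∏ j ∈ s t, y j := sum_pos (fun t _ => hPy t) ⟨t, ht⟩
  have hmean : ∑ t ∈ T, (∏ j ∈ s t, y j) / (∑ t ∈ T, ∏ j ∈ s t, y j) *
      ((∏ j ∈ s t, x j) / ∏ j ∈ s t, y j) = 1 := by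
    rw [sum_div_mul_div_eq_sum_div hy, hsum, div_self hF.ne']
  have equal := (Real.geom_mean_eq_arith_mean_weighted_iff_of_pos' T
    (fun t => (∏ j ∈ s t, y j) / ∑ t ∈ T, ∏ j ∈ s t, y j)
    (fun t => (∏ j ∈ s t, x j) / ∏ j ∈ s t, y j)
    (fun t _ => div_pos (hPy t) hF) (by rw [← sum_div, div_self hF.ne'])
    (fun t _ => div_nonneg (prod_nonneg fun j _ => hx j) (hPy t).le)).1
    (by rw [prod_div_rpow_eq_one hy hx hprod hmarg hF.le, hmean]) t ht
  rw [hmean] at equal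
  exact (div_eq_one_iff_eq (hPy t).ne').1 equal

end MarginalAMGM

section ChainMinimizer

variable {r : ℕ} {ν : ℝ}

theorem sum_range_pow_mul_ite_last (hν : ν ≠ 1) (N : ℕ) :
    ∑ m ∈ range (N + 1), ν ^ m * (if m = N then (1 - ν)⁻¹ else 1) = (1 - ν)⁻¹ := by
  rw [sum_range_succ, if_pos rfl,
    sum_congr rfl fun m hm => by rw [if_neg (mem_range.1 hm).ne, mul_one], geom_sum_eq hν]
  have : ν - 1 ≠ 0 := sub_ne_zero.2 hν
  have : 1 - ν ≠ 0 := sub_ne_zero.2 hν.symm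
  field_simp
  ring

theorem sum_range_ite_le_left (hν : ν ≠ 1) {j : ℕ} (hj : j < r) :
    ∑ k ∈ range r, (if k ≤ j then ν ^ (j - k) * (if k = 0 then (1 - ν)⁻¹ else 1) else 0) =
      (1 - ν)⁻¹ := by
  have hfilter : {k ∈ range r | k ≤ j} = range (j + 1) := by
    ext k; simp only [mem_filter, mem_range]; omega
  rw [← sum_filter, hfilter, ← sum_range_reflect]
  refine (sum_congr rfl fun k hk => ?_).trans (sum_range_pow_mul_ite_last hν j)
  have hk : k ≤ j := Nat.lt_succ_iff.1 (mem_range.1 hk)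
  have hzero : j - k = 0 ↔ k = j := by omega
  simp only [add_tsub_cancel_right, Nat.sub_sub_self hk, hzero]

theorem sum_range_ite_le_right (hν : ν ≠ 1) {k : ℕ} (hk : k < r) :
    ∑ i ∈ range r, (if k ≤ i then ν ^ (i - k + 1) * (if i = r - 1 then (1 - ν)⁻¹ else 1) else 0) =
      ν * (1 - ν)⁻¹ := by
  have hfilter : {i ∈ range r | k ≤ i} = Ico k r := by
    ext i; simp only [mem_filter, mem_range, mem_Ico]; omega
  obtain ⟨N, rfl⟩ : ∃ N, r = k + (N + 1) := ⟨r - k - 1, by omega⟩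
  rw [← sum_filter, hfilter, sum_Ico_eq_sum_range, add_tsub_cancel_left]
  calc _ = ν * ∑ m ∈ range (N + 1), ν ^ m * (if m = N then (1 - ν)⁻¹ else 1) := by
        rw [mul_sum]
        refine sum_congr rfl fun m _ => ?_
        have hlast : k + m = k + (N + 1) - 1 ↔ m = N := by omega
        simp only [add_tsub_cancel_left, pow_succ, hlast]
        ring
    _ = ν * (1 - ν)⁻¹ := by rw [sum_range_pow_mul_ite_last hν N]

/-- The point `(μ, ν, …, ν, μ)` with `μ = ν / (1 - ν)`, indexed by `ℕ`; for `r = 1` both boundary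
factors hit the single entry, which becomes `ν / (1 - ν) ^ 2`. -/
noncomputable def chainMinimizer (r : ℕ) (ν : ℝ) (n : ℕ) : ℝ :=
  ν * (if n = 0 then (1 - ν)⁻¹ else 1) * (if n = r - 1 then (1 - ν)⁻¹ else 1)

theorem prod_Icc_chainMinimizer {k i : ℕ} (hki : k ≤ i) (hi : i < r) :
    ∏ n ∈ Icc k i, chainMinimizer r ν n =
      ν ^ (i - k + 1) * (if k = 0 then (1 - ν)⁻¹ else 1) *
        (if i = r - 1 then (1 - ν)⁻¹ else 1) := by
  have h0 : 0 ∈ Icc k i ↔ k = 0 := by rw [mem_Icc]; omega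
  have hlast : r - 1 ∈ Icc k i ↔ i = r - 1 := by rw [mem_Icc]; omega
  simp only [chainMinimizer, prod_mul_distrib, prod_const, Nat.card_Icc, prod_ite_eq', h0, hlast]
  congr 3
  omega

theorem chainMinimizer_pos (hν0 : 0 < ν) (hν1 : ν < 1) (n : ℕ) : 0 < chainMinimizer r ν n := by
  have : 0 < (1 - ν)⁻¹ := inv_pos.2 (sub_pos.2 hν1)
  unfold chainMinimizer
  split_ifs <;> positivity

theorem prod_chainMinimizer (hr : 1 ≤ r) :
    ∏ j : Fin r, chainMinimizer r ν j = ν ^ r * (1 - ν)⁻¹ ^ 2 := by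
  have hrange : range r = Icc 0 (r - 1) := by ext n; simp only [mem_range, mem_Icc]; omega
  rw [Fin.prod_univ_eq_prod_range (chainMinimizer r ν), hrange,
    prod_Icc_chainMinimizer (Nat.zero_le _) (by omega), if_pos rfl, if_pos rfl,
    Nat.sub_zero, Nat.sub_add_cancel hr]
  ring

theorem lt_half_of_pow_eq_mul_sq {ρ : ℝ} (hν0 : 0 < ν) (hν1 : ν < 1) (hρ1 : ρ ≤ (1 / 2) ^ r)
    (hνeq : ν ^ r = ρ * (1 - ν) ^ 2) : ν < 1 / 2 := by
  by_contra! hν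
  have hpow : (1 / 2 : ℝ) ^ r ≤ ν ^ r := pow_le_pow_left₀ (by norm_num) hν r
  have hρ : 0 < ρ * (1 - ν) ^ 2 := hνeq ▸ pow_pos hν0 r
  have hsq : (1 - ν) ^ 2 < 1 := by nlinarith
  nlinarith

theorem chainMinimizer_le_one (hν : ν ≤ 1 / 2) (hr : 2 ≤ r) (n : ℕ) :
    chainMinimizer r ν n ≤ 1 := by
  have hboundary : ν * (1 - ν)⁻¹ ≤ 1 := by
    rw [mul_inv_le_iff₀ (by linarith)]; linarith
  unfold chainMinimizer
  split_ifs
  · omega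
  all_goals simp only [mul_one]; linarith

theorem chainMinimizer_mem_Icc {ρ : ℝ} (hν0 : 0 < ν) (hν1 : ν < 1) (hr : 1 ≤ r)
    (hρ1 : ρ ≤ (1 / 2) ^ r) (hνeq : ν ^ r = ρ * (1 - ν) ^ 2) (j : Fin r) :
    chainMinimizer r ν j ∈ Set.Icc 0 1 := by
  refine ⟨(chainMinimizer_pos hν0 hν1 j).le, ?_⟩
  rcases hr.eq_or_lt with rfl | hr
  · have hρ : chainMinimizer 1 ν j = ρ := by
      have hprod := prod_chainMinimizer (r := 1) (ν := ν) le_rfl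
      rw [Fin.prod_univ_one, hνeq] at hprod
      rw [Fin.fin_one_eq_zero j, hprod]
      field_simp [sub_ne_zero.2 hν1.ne']
    linarith [pow_one (1 / 2 : ℝ)]
  · exact chainMinimizer_le_one (lt_half_of_pow_eq_mul_sq hν0 hν1 hρ1 hνeq).le hr j

def intervals (r : ℕ) : Finset (Fin r × Fin r) := {p | p.1 ≤ p.2}

theorem sum_intervals (g : Fin r → Fin r → ℝ) :
    ∑ p ∈ intervals r, g p.1 p.2 = ∑ k, ∑ i, if k ≤ i then g k i else 0 := by
  rw [intervals, sum_filter, Fintype.sum_prod_type]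

theorem Fin.prod_Icc_comp_val {M : Type*} [CommMonoid M] (f : ℕ → M) (k i : Fin r) :
    ∏ j ∈ Icc k i, f j = ∏ n ∈ Icc (k : ℕ) i, f n := by
  rw [← Fin.map_valEmbedding_Icc, prod_map]
  rfl

theorem prod_Icc_fin_chainMinimizer {k i : Fin r} (hki : k ≤ i) :
    ∏ j ∈ Icc k i, chainMinimizer r ν j =
      ν ^ ((i : ℕ) - k + 1) * (if (k : ℕ) = 0 then (1 - ν)⁻¹ else 1) *
        (if (i : ℕ) = r - 1 then (1 - ν)⁻¹ else 1) := by
  rw [Fin.prod_Icc_comp_val, prod_Icc_chainMinimizer hki i.isLt]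

theorem sum_intervals_mem_prod_chainMinimizer (hν : ν ≠ 1) (j : Fin r) :
    ∑ p ∈ intervals r with j ∈ Icc p.1 p.2, ∏ n ∈ Icc p.1 p.2, chainMinimizer r ν n =
      ν * (1 - ν)⁻¹ ^ 2 := by
  have hfilter : {p ∈ intervals r | j ∈ Icc p.1 p.2} =
      ({p | p.1 ≤ j ∧ j ≤ p.2} : Finset (Fin r × Fin r)) := by
    ext p
    simp only [intervals, mem_filter, mem_univ, true_and, mem_Icc, and_iff_right_iff_imp]
    exact fun h => h.1.trans h.2
  rw [hfilter, sum_filter, Fintype.sum_prod_type]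
  calc _ = ∑ k : Fin r, ∑ i : Fin r,
        (if k ≤ j then ν ^ ((j : ℕ) - k) * (if (k : ℕ) = 0 then (1 - ν)⁻¹ else 1) else 0) *
        (if j ≤ i then ν ^ ((i : ℕ) - j + 1) * (if (i : ℕ) = r - 1 then (1 - ν)⁻¹ else 1)
          else 0) := by
        refine sum_congr rfl fun k _ => sum_congr rfl fun i _ => ?_
        by_cases hkj : k ≤ j <;> by_cases hji : j ≤ i <;> simp only [hkj, hji, and_self,
          and_false, false_and, if_true, if_false, zero_mul, mul_zero]
        rw [prod_Icc_fin_chainMinimizer (hkj.trans hji)]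
        have : (i : ℕ) - k + 1 = ((j : ℕ) - k) + ((i : ℕ) - j + 1) := by
          rw [Fin.le_iff_val_le_val] at hkj hji; omega
        rw [this, pow_add]
        ring
    _ = (1 - ν)⁻¹ * (ν * (1 - ν)⁻¹) := by
        rw [← sum_mul_sum]
        simp only [Fin.le_iff_val_le_val]
        rw [Fin.sum_univ_eq_sum_range (fun k => if k ≤ (j : ℕ) then
            ν ^ ((j : ℕ) - k) * (if k = 0 then (1 - ν)⁻¹ else 1) else 0),
          Fin.sum_univ_eq_sum_range (fun i => if (j : ℕ) ≤ i then
            ν ^ (i - j + 1) * (if i = r - 1 then (1 - ν)⁻¹ else 1) else 0),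
          sum_range_ite_le_left hν j.isLt, sum_range_ite_le_right hν j.isLt]
    _ = ν * (1 - ν)⁻¹ ^ 2 := by ring

theorem sum_intervals_prod_chainMinimizer (hν : ν ≠ 1) (hr : 1 ≤ r) :
    ∑ p ∈ intervals r, ∏ n ∈ Icc p.1 p.2, chainMinimizer r ν n =
      (r + ν / (1 - ν)) * (ν / (1 - ν)) := by
  rw [sum_intervals fun k i => ∏ n ∈ Icc k i, chainMinimizer r ν n]
  calc _ = ∑ k : Fin r, (if (k : ℕ) = 0 then (1 - ν)⁻¹ else 1) * (ν * (1 - ν)⁻¹) := by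
        refine sum_congr rfl fun k _ => ?_
        rw [← sum_range_ite_le_right hν k.isLt, mul_sum,
          ← Fin.sum_univ_eq_sum_range (fun i => (if (k : ℕ) = 0 then (1 - ν)⁻¹ else 1) *
            if (k : ℕ) ≤ i then ν ^ (i - k + 1) * (if i = r - 1 then (1 - ν)⁻¹ else 1) else 0)]
        refine sum_congr rfl fun i _ => ?_
        by_cases hki : k ≤ i
        · rw [if_pos hki, if_pos (Fin.le_iff_val_le_val.1 hki), prod_Icc_fin_chainMinimizer hki]
          ring
        · rw [if_neg hki, if_neg (mt Fin.le_iff_val_le_val.2 hki), mul_zero]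
    _ = (r + ν / (1 - ν)) * (ν / (1 - ν)) := by
        obtain ⟨N, rfl⟩ : ∃ N, r = N + 1 := ⟨r - 1, by omega⟩
        rw [← sum_mul, Fin.sum_univ_eq_sum_range (fun k => if k = 0 then (1 - ν)⁻¹ else 1),
          sum_range_succ']
        have : 1 - ν ≠ 0 := sub_ne_zero.2 hν.symm
        simp only [Nat.succ_ne_zero, if_false, if_true, sum_const, card_range, nsmul_eq_mul,
          mul_one, Nat.cast_add, Nat.cast_one]
        field_simp
        ring

end ChainMinimizer

theorem constrained_min_f_general (r : ℕ) (hr : 1 ≤ r) (ρ ν : ℝ)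
    (hρ1 : ρ ≤ (1 / 2) ^ r)
    (hν : ν ∈ Set.Ioo (0 : ℝ) 1) (hνeq : ν ^ r = ρ * (1 - ν) ^ 2) :
    IsLeast {y : ℝ | ∃ x : Fin r → ℝ, (∀ j, x j ∈ Set.Icc (0 : ℝ) 1) ∧
        (∏ j, x j) = ρ ∧
        y = ∑ k : Fin r, ∑ i : Fin r, if k ≤ i then ∏ j ∈ Finset.Icc k i, x j else 0}
      (((r : ℝ) + ν / (1 - ν)) * (ν / (1 - ν))) ∧
    (∃! x : Fin r → ℝ, (∀ j, x j ∈ Set.Icc (0 : ℝ) 1) ∧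
        (∏ j, x j) = ρ ∧
        (∑ k : Fin r, ∑ i : Fin r, if k ≤ i then ∏ j ∈ Finset.Icc k i, x j else 0) =
          ((r : ℝ) + ν / (1 - ν)) * (ν / (1 - ν))) := by
  obtain ⟨hν0, hν1⟩ := hν
  set y : Fin r → ℝ := fun j => chainMinimizer r ν j
  have hy : ∀ j, 0 < y j := fun j => chainMinimizer_pos hν0 hν1 j
  have hy_mem : ∀ j, y j ∈ Set.Icc 0 1 := chainMinimizer_mem_Icc hν0 hν1 hr hρ1 hνeq
  have hy_prod : ∏ j, y j = ρ := by
    rw [prod_chainMinimizer hr, hνeq]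
    field_simp [sub_ne_zero.2 hν1.ne']
  have hy_sum := sum_intervals_prod_chainMinimizer hν1.ne hr
  have hmarg := sum_intervals_mem_prod_chainMinimizer hν1.ne (r := r)
  simp only [← sum_intervals]
  refine ⟨⟨⟨y, hy_mem, hy_prod, hy_sum.symm⟩, ?_⟩, ⟨y, ⟨hy_mem, hy_prod, hy_sum⟩, ?_⟩⟩
  · rintro _ ⟨x, hx, hx_prod, rfl⟩
    rw [← hy_sum]
    exact sum_prod_le_of_marginal_eq hy (fun j => (hx j).1) (hx_prod.trans hy_prod.symm) hmarg
  · rintro x ⟨hx, hx_prod, hx_sum⟩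
    funext j
    have hdiag := prod_eq_of_sum_prod_eq hy (fun j => (hx j).1) (hx_prod.trans hy_prod.symm)
      hmarg (hx_sum.trans hy_sum.symm) (j, j) (by simp [intervals])
    simpa only [Icc_self, prod_singleton] using hdiag

theorem constrained_min_f (r : ℕ) (hr : 1 ≤ r) (ρ ν : ℝ)
    (hρ0 : 0 < ρ) (hρ1 : ρ ≤ (1 / 2) ^ r)
    (hν : ν ∈ Set.Ioo (0 : ℝ) 1) (hνeq : ν ^ r = ρ * (1 - ν) ^ 2) :
    IsLeast {y : ℝ | ∃ x : Fin r → ℝ, (∀ j, x j ∈ Set.Icc (0 : ℝ) 1) ∧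
        (∏ j, x j) = ρ ∧
        y = ∑ k : Fin r, ∑ i : Fin r, if k ≤ i then ∏ j ∈ Finset.Icc k i, x j else 0}
      (((r : ℝ) + ν / (1 - ν)) * (ν / (1 - ν))) ∧
    (∃! x : Fin r → ℝ, (∀ j, x j ∈ Set.Icc (0 : ℝ) 1) ∧
        (∏ j, x j) = ρ ∧
        (∑ k : Fin r, ∑ i : Fin r, if k ≤ i then ∏ j ∈ Finset.Icc k i, x j else 0) =
          ((r : ℝ) + ν / (1 - ν)) * (ν / (1 - ν))) :=
  constrained_min_f_general r hr ρ ν hρ1 hν hνeq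
end

section
/- Let p be a prime, r ≥ 2 an integer and σ ≥ (r-1)·log 2 / log p a real number. Let ν ∈ (0,1) be the unique solution of p^σ·x^{r-1} = (1-x)², and μ = ν/(1-ν). Then the minimum of h_p(α_1,...,α_r) over real 0 ≤ α_1 ≤ ... ≤ α_r ≤ σ equals (r - 1 + μ)·μ. -/
/-!
At the minimiser, `p ^ (-α_m)` is the weight `b_m = extremalWeight ν n m` (indices `0, …, n`,
`n = r - 1`): `b_0 = 1`, `b_m = ν^m / (1 - ν)` inside, and `b_n = ν^n / (1 - ν)^2 = p^(-σ)`.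
For arbitrary `α`, write `p ^ (α_k - α_i) = (b_i / b_k) · exp (w_k - w_i)` with
`w_m = α_m log p + log b_m`; the tangent line `exp t ≥ 1 + t` bounds `h_p(α)` below by
`Σ_{k<i} b_i / b_k + Σ_m (out_m - in_m) w_m`, where `out_m`, `in_m` are the total weights
`b_i / b_k` of the pairs leaving and entering `m`. The weights balance this flow at every interior
index, so the correction is `ν / (1 - ν)^2 · (w_0 - w_n) ≥ 0`, since `α_0 ≥ 0` and `α_n ≤ σ`.
The bound on `σ` forces `ν ≤ 1/2`, which is what makes the minimiser monotone.
-/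

open Finset Real

theorem le_sum_sum_mul_exp_sub {ι : Type*} [Fintype ι] (c : ι → ι → ℝ) (hc : ∀ k i, 0 ≤ c k i)
    (w : ι → ℝ) :
    ∑ k, ∑ i, c k i + ∑ m, (∑ i, c m i - ∑ k, c k m) * w m ≤
      ∑ k, ∑ i, c k i * exp (w k - w i) := by
  calc ∑ k, ∑ i, c k i + ∑ m, (∑ i, c m i - ∑ k, c k m) * w m
      = ∑ k, ∑ i, c k i * (1 + (w k - w i)) := by
        simp only [sub_mul, sum_sub_distrib, sum_mul, mul_add, mul_sub, mul_one, sum_add_distrib]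
        rw [sum_comm (f := fun k m => c k m * w m)]
    _ ≤ ∑ k, ∑ i, c k i * exp (w k - w i) := by
        gcongr with k _ i _
        · exact hc k i
        · linarith [add_one_le_exp (w k - w i)]

theorem pow_le_rpow_of_mul_log_div_log_le {a p σ : ℝ} (n : ℕ) (ha : 0 < a) (hp : 1 < p)
    (h : n * log a / log p ≤ σ) : a ^ n ≤ p ^ σ := by
  rw [div_le_iff₀ (log_pos hp)] at h
  rw [← log_le_log_iff (by positivity) (rpow_pos_of_pos (by linarith) σ), log_pow,
    log_rpow (by linarith)]
  linarith

theorem sum_fin_ite_lt_eq_sum_range {r : ℕ} (f : ℕ → ℝ) (m : Fin r) :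
    ∑ k : Fin r, (if k < m then f k else 0) = ∑ k ∈ range m, f k := by
  simp only [Fin.lt_def]
  rw [Fin.sum_univ_eq_sum_range (fun k => if k < (m : ℕ) then f k else 0), ← sum_filter]
  congr 1
  ext k
  simp only [mem_filter, mem_range]
  omega

theorem sum_fin_ite_gt_eq_sum_Ico {r : ℕ} (f : ℕ → ℝ) (m : Fin r) :
    ∑ i : Fin r, (if m < i then f i else 0) = ∑ i ∈ Ico (m + 1 : ℕ) r, f i := by
  simp only [Fin.lt_def]
  rw [Fin.sum_univ_eq_sum_range (fun i => if (m : ℕ) < i then f i else 0), ← sum_filter]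
  congr 1
  ext i
  simp only [mem_filter, mem_range, mem_Ico]
  omega

noncomputable def pairPowSum {r : ℕ} (p : ℝ) (α : Fin r → ℝ) : ℝ :=
  ∑ k, ∑ i, if k < i then p ^ (α k - α i) else 0

noncomputable def edgeWeight {r : ℕ} (b : ℕ → ℝ) (k i : Fin r) : ℝ :=
  if k < i then b i / b k else 0

section edgeWeight

variable {r : ℕ} {b : ℕ → ℝ}

theorem edgeWeight_nonneg (hb : ∀ m, 0 < b m) (k i : Fin r) : 0 ≤ edgeWeight b k i := by
  unfold edgeWeight
  split_ifs
  exacts [div_nonneg (hb i).le (hb k).le, le_rfl]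

theorem sum_edgeWeight_fst (m : Fin r) :
    ∑ i, edgeWeight b m i = ∑ i ∈ Ico (m + 1 : ℕ) r, b i / b m :=
  sum_fin_ite_gt_eq_sum_Ico (fun i => b i / b m) m

theorem sum_edgeWeight_snd (m : Fin r) : ∑ k, edgeWeight b k m = ∑ k ∈ range m, b m / b k :=
  sum_fin_ite_lt_eq_sum_range (fun k => b m / b k) m

theorem pairPowSum_eq_sum_edgeWeight_mul_exp {p : ℝ} (hp : 0 < p) (hb : ∀ m, 0 < b m)
    (α : Fin r → ℝ) :
    pairPowSum p α = ∑ k, ∑ i, edgeWeight b k i *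
      exp ((log p * α k + log (b k)) - (log p * α i + log (b i))) := by
  refine sum_congr rfl fun k _ => sum_congr rfl fun i _ => ?_
  unfold edgeWeight
  split_ifs
  · have : log p * α k + log (b k) - (log p * α i + log (b i)) =
        log p * (α k - α i) - log (b i / b k) := by
      rw [log_div (hb i).ne' (hb k).ne']
      ring
    rw [this, exp_sub, exp_log (div_pos (hb i) (hb k)), rpow_def_of_pos hp,
      mul_div_cancel₀ _ (div_pos (hb i) (hb k)).ne']
  · simp

theorem pairPowSum_neg_logb {p : ℝ} (hp₀ : 0 < p) (hp₁ : p ≠ 1) (hb : ∀ m, 0 < b m) :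
    pairPowSum p (fun m : Fin r => -logb p (b m)) = ∑ k : Fin r, ∑ i, edgeWeight b k i := by
  refine sum_congr rfl fun k _ => sum_congr rfl fun i _ => ?_
  unfold edgeWeight
  split_ifs
  · rw [neg_sub_neg, ← logb_div (hb i).ne' (hb k).ne', rpow_logb hp₀ hp₁ (div_pos (hb i) (hb k))]
  · rfl

end edgeWeight

noncomputable def extremalWeight (ν : ℝ) (n m : ℕ) : ℝ :=
  if m = 0 then 1 else if m < n then ν ^ m / (1 - ν) else ν ^ m / (1 - ν) ^ 2

section extremalWeight

variable {ν : ℝ} {n m : ℕ}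

@[simp]
theorem extremalWeight_zero : extremalWeight ν n 0 = 1 := rfl

theorem extremalWeight_of_pos_of_lt (hm : 0 < m) (hmn : m < n) :
    extremalWeight ν n m = ν ^ m / (1 - ν) := by
  simp [extremalWeight, hm.ne', hmn]

theorem extremalWeight_self (hn : 0 < n) : extremalWeight ν n n = ν ^ n / (1 - ν) ^ 2 := by
  simp [extremalWeight, hn.ne']

theorem extremalWeight_pos (hν₀ : 0 < ν) (hν₁ : ν < 1) (m : ℕ) : 0 < extremalWeight ν n m := by
  have : 0 < 1 - ν := by linarith
  unfold extremalWeight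
  split_ifs <;> positivity

theorem sum_range_inv_extremalWeight (hν : ν ≠ 0) {j : ℕ} (hj : j < n) :
    ∑ k ∈ range (j + 1), (extremalWeight ν n k)⁻¹ = ν⁻¹ ^ j := by
  induction j with
  | zero => simp
  | succ j ih =>
    rw [sum_range_succ, ih (by omega), extremalWeight_of_pos_of_lt (by omega) hj, inv_pow, inv_pow]
    field_simp
    ring

theorem sum_Ico_extremalWeight (hν : ν ≠ 1) (hm : m < n) :
    ∑ i ∈ Ico (m + 1) (n + 1), extremalWeight ν n i = ν ^ (m + 1) / (1 - ν) ^ 2 := by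
  have : 1 - ν ≠ 0 := sub_ne_zero.mpr hν.symm
  induction Nat.le_sub_one_of_lt hm using Nat.decreasingInduction with
  | self =>
    rw [Nat.sub_add_cancel (by omega), Nat.Ico_succ_singleton, sum_singleton,
      extremalWeight_self (by omega)]
  | of_succ k hk ih =>
    rw [sum_eq_sum_Ico_succ_bot (by omega), ih (by omega),
      extremalWeight_of_pos_of_lt (by omega) (by omega)]
    field_simp
    ring

theorem sum_range_extremalWeight_div (hν : ν ≠ 0) (hmn : m ≤ n) :
    ∑ k ∈ range m, extremalWeight ν n m / extremalWeight ν n k =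
      if m = 0 then 0 else if m < n then ν / (1 - ν) else ν / (1 - ν) ^ 2 := by
  obtain _ | j := m
  · simp
  have hsum := sum_range_inv_extremalWeight (n := n) hν (j := j) (by omega)
  simp only [div_eq_mul_inv, ← mul_sum, hsum, inv_pow, Nat.add_one_ne_zero, if_false]
  split_ifs with h
  · rw [extremalWeight_of_pos_of_lt (by omega) h]
    field_simp
    ring
  · rw [show j + 1 = n by omega, extremalWeight_self (by omega), ← show j + 1 = n by omega]
    field_simp
    ring

theorem sum_Ico_extremalWeight_div (hν₀ : 0 < ν) (hν₁ : ν < 1) (hn : 0 < n) (hmn : m ≤ n) :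
    ∑ i ∈ Ico (m + 1) (n + 1), extremalWeight ν n i / extremalWeight ν n m =
      if m = 0 then ν / (1 - ν) ^ 2 else if m < n then ν / (1 - ν) else 0 := by
  rw [← sum_div]
  split_ifs with h0 h
  · simp [h0, sum_Ico_extremalWeight hν₁.ne hn]
  · rw [sum_Ico_extremalWeight hν₁.ne h, extremalWeight_of_pos_of_lt (by omega) h]
    have : 1 - ν ≠ 0 := by linarith
    field_simp
    ring
  · simp [show m = n by omega]

theorem sum_edgeWeight_fst_sub_snd_extremalWeight (hν₀ : 0 < ν) (hν₁ : ν < 1)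
    (hn : 0 < n) (m : Fin (n + 1)) :
    ∑ i, edgeWeight (extremalWeight ν n) m i - ∑ k, edgeWeight (extremalWeight ν n) k m =
      (if m = 0 then ν / (1 - ν) ^ 2 else 0) - (if m = Fin.last n then ν / (1 - ν) ^ 2 else 0) := by
  rw [sum_edgeWeight_fst, sum_edgeWeight_snd, sum_Ico_extremalWeight_div hν₀ hν₁ hn m.is_le,
    sum_range_extremalWeight_div hν₀.ne' m.is_le]
  simp only [Fin.ext_iff, Fin.val_zero, Fin.val_last]
  split_ifs <;> first | omega | ring

theorem sum_sum_edgeWeight_extremalWeight (hν₀ : 0 < ν) (hν₁ : ν < 1) (hn : 0 < n) :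
    ∑ k : Fin (n + 1), ∑ i, edgeWeight (extremalWeight ν n) k i =
      (n + ν / (1 - ν)) * (ν / (1 - ν)) := by
  simp only [sum_edgeWeight_fst]
  rw [Fin.sum_univ_eq_sum_range (fun m => ∑ i ∈ Ico (m + 1) (n + 1),
      extremalWeight ν n i / extremalWeight ν n m),
    sum_congr rfl fun m hm => sum_Ico_extremalWeight_div hν₀ hν₁ hn (mem_range_succ_iff.mp hm)]
  obtain ⟨n, rfl⟩ : ∃ n', n = n' + 1 := ⟨n - 1, by omega⟩
  have hmid : ∀ m ∈ range n, (if m + 1 = 0 then ν / (1 - ν) ^ 2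
      else if m + 1 < n + 1 then ν / (1 - ν) else 0) = ν / (1 - ν) := fun m hm => by
    rw [if_neg m.succ_ne_zero, if_pos (by simpa using hm)]
  rw [sum_range_succ, sum_range_succ', sum_congr rfl hmid]
  have : 1 - ν ≠ 0 := by linarith
  simp only [sum_const, card_range, nsmul_eq_mul, if_pos, lt_irrefl, if_false, Nat.add_one_ne_zero]
  push_cast
  field_simp
  ring

theorem pairPowSum_neg_logb_extremalWeight_le {p σ : ℝ} (hp : 1 < p) (hν₀ : 0 < ν) (hν₁ : ν < 1)
    (hn : 0 < n) (hbn : extremalWeight ν n n = p ^ (-σ)) {α : Fin (n + 1) → ℝ} (h₀ : 0 ≤ α 0)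
    (hσ : α (Fin.last n) ≤ σ) :
    pairPowSum p (fun m : Fin (n + 1) => -logb p (extremalWeight ν n m)) ≤ pairPowSum p α := by
  have hb := extremalWeight_pos (n := n) hν₀ hν₁
  set w : Fin (n + 1) → ℝ := fun m => log p * α m + log (extremalWeight ν n m)
  have hw : w (Fin.last n) ≤ w 0 := by
    simp only [w, Fin.val_last, hbn, log_rpow (zero_lt_one.trans hp), Fin.val_zero,
      extremalWeight_zero, log_one]
    nlinarith [log_pos hp]
  rw [pairPowSum_neg_logb (zero_lt_one.trans hp) hp.ne' hb,
    pairPowSum_eq_sum_edgeWeight_mul_exp (zero_lt_one.trans hp) hb]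
  refine le_trans ?_ (le_sum_sum_mul_exp_sub _ (edgeWeight_nonneg hb) w)
  simp only [sum_edgeWeight_fst_sub_snd_extremalWeight hν₀ hν₁ hn, sub_mul, ite_mul,
    zero_mul, sum_sub_distrib, sum_ite_eq']
  simp only [mem_univ, if_true, le_add_iff_nonneg_right, sub_nonneg]
  exact mul_le_mul_of_nonneg_left hw (by positivity)

theorem extremalWeight_succ_le (hν₀ : 0 < ν) (hν : ν ≤ 1 / 2) (hlast : extremalWeight ν n n ≤ 1)
    (hm : m < n) : extremalWeight ν n (m + 1) ≤ extremalWeight ν n m := by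
  have h1ν : 0 < 1 - ν := by linarith
  obtain h | h : m + 1 < n ∨ m + 1 = n := by omega
  · rcases Nat.eq_zero_or_pos m with rfl | hm₀
    · rw [zero_add, extremalWeight_of_pos_of_lt one_pos h, extremalWeight_zero, pow_one,
        div_le_one h1ν]
      linarith
    · rw [extremalWeight_of_pos_of_lt (by omega) h, extremalWeight_of_pos_of_lt hm₀ hm]
      exact div_le_div_of_nonneg_right (pow_le_pow_of_le_one hν₀.le (by linarith) m.le_succ)
        h1ν.le
  · rcases Nat.eq_zero_or_pos m with rfl | hm₀
    · simpa [h] using hlast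
    · rw [h, extremalWeight_self (by omega), extremalWeight_of_pos_of_lt hm₀ hm, ← h,
        div_le_div_iff₀ (by positivity) h1ν, pow_succ]
      nlinarith [mul_nonneg (mul_nonneg (pow_pos hν₀ m).le h1ν.le) (by linarith : 0 ≤ 1 - 2 * ν)]

theorem monotone_neg_logb_extremalWeight {p : ℝ} (hp : 1 < p) (hν₀ : 0 < ν) (hν : ν ≤ 1 / 2)
    (hlast : extremalWeight ν n n ≤ 1) :
    Monotone fun m : Fin (n + 1) => -logb p (extremalWeight ν n m) := by
  refine Fin.monotone_iff_le_succ.mpr fun m => neg_le_neg (logb_le_logb_of_le hp ?_ ?_)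
  · exact extremalWeight_pos hν₀ (by linarith) _
  · exact extremalWeight_succ_le hν₀ hν hlast m.is_lt

end extremalWeight

theorem mtilde_formula (p : ℕ) (hp : p.Prime) (r : ℕ) (hr : 2 ≤ r)
    (σ : ℝ) (hσ : ((r : ℝ) - 1) * Real.log 2 / Real.log p ≤ σ)
    (ν : ℝ) (hν : ν ∈ Set.Ioo (0 : ℝ) 1)
    (hνeq : (p : ℝ) ^ σ * ν ^ (r - 1) = (1 - ν) ^ 2) :
    IsLeast {y : ℝ | ∃ α : Fin r → ℝ, Monotone α ∧ (∀ i, α i ∈ Set.Icc 0 σ) ∧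
        y = ∑ k : Fin r, ∑ i : Fin r, if k < i then (p : ℝ) ^ (α k - α i) else 0}
      (((r : ℝ) - 1 + ν / (1 - ν)) * (ν / (1 - ν))) := by
  obtain ⟨n, rfl⟩ : ∃ n, r = n + 1 := ⟨r - 1, by omega⟩
  obtain ⟨hν₀, hν₁⟩ := hν
  have hn : 0 < n := by omega
  have hp₁ : (1 : ℝ) < p := by exact_mod_cast hp.one_lt
  push_cast at hσ ⊢
  rw [add_sub_cancel_right] at hσ ⊢
  rw [Nat.add_sub_cancel] at hνeq
  have h2σ : (2 : ℝ) ^ n ≤ (p : ℝ) ^ σ := pow_le_rpow_of_mul_log_div_log_le n two_pos hp₁ hσ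
  have hσ₀ : 0 ≤ σ := (div_nonneg (by positivity) (log_nonneg hp₁.le)).trans hσ
  have hν₂ : ν ≤ 1 / 2 := by
    have : (2 * ν) ^ n < 1 := by
      calc (2 * ν) ^ n ≤ (p : ℝ) ^ σ * ν ^ n := by rw [mul_pow]; gcongr
        _ < 1 := by nlinarith
    linarith [(pow_lt_one_iff_of_nonneg (by positivity) hn.ne').mp this]
  have hbn : extremalWeight ν n n = (p : ℝ) ^ (-σ) := by
    rw [extremalWeight_self hn, rpow_neg (by positivity), ← hνeq]
    field_simp
  have hmono := monotone_neg_logb_extremalWeight hp₁ hν₀ hν₂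
    (hbn ▸ rpow_le_one_of_one_le_of_nonpos hp₁.le (neg_nonpos.mpr hσ₀))
  have hmin : pairPowSum p (fun m : Fin (n + 1) => -logb p (extremalWeight ν n m)) =
      (n + ν / (1 - ν)) * (ν / (1 - ν)) := by
    rw [pairPowSum_neg_logb (zero_lt_one.trans hp₁) hp₁.ne' (extremalWeight_pos hν₀ hν₁),
      sum_sum_edgeWeight_extremalWeight hν₀ hν₁ hn]
  refine ⟨⟨_, hmono, fun m => ⟨?_, ?_⟩, hmin.symm⟩, ?_⟩
  · simpa using hmono (Fin.zero_le m)
  · simpa [hbn, logb_rpow (zero_lt_one.trans hp₁) hp₁.ne'] using hmono (Fin.le_last m)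
  · rintro y ⟨α, -, hα, rfl⟩
    exact hmin ▸ pairPowSum_neg_logb_extremalWeight_le hp₁ hν₀ hν₁ hn hbn (hα 0).1 (hα _).2
end

section
/- Let p be a prime and 3 ≤ r ≤ s integers. Set δ := p^{-(s-1)/(r-1)} and let μ̃ ∈ (0,1) satisfy p^{s-1}·μ̃^{r-1} = (1+μ̃)^{r-3}. Then δ ≤ μ̃ < δ + δ²/(1-δ). -/
/-! Write `n = r - 1`, `m = s - 1` and `c = p ^ m`, so that `δ ^ n = c⁻¹` and the defining identity
reads `c μ ^ n = (1 + μ) ^ (r - 3)`. Since `1 ≤ (1 + μ) ^ (r - 3) < (1 + μ) ^ n`, this gives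
`δ ^ n ≤ μ ^ n < (δ (1 + μ)) ^ n`, hence `δ ≤ μ < δ (1 + μ)`, and the last inequality solves to
`μ < δ / (1 - δ) = δ + δ ^ 2 / (1 - δ)`. -/

theorem rpow_neg_div_natCast_pow {x : ℝ} (hx : 0 ≤ x) (y : ℝ) {n : ℕ} (hn : n ≠ 0) :
    (x ^ (-(y / n))) ^ n = (x ^ y)⁻¹ := by
  rw [← Real.rpow_natCast, ← Real.rpow_mul hx, neg_mul, div_mul_cancel₀ _ (by exact_mod_cast hn),
    Real.rpow_neg hx]

section RootBounds

variable {c δ μ : ℝ} {k n : ℕ}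

theorem le_of_mul_pow_eq_one_add_pow (h : c * μ ^ n = (1 + μ) ^ k) (hδ : δ ^ n = c⁻¹)
    (hc : 0 < c) (hn : n ≠ 0) (hμ : 0 ≤ μ) : δ ≤ μ := by
  refine le_of_pow_le_pow_left₀ hn hμ ?_
  rw [hδ, inv_le_iff_one_le_mul₀' hc, h]
  exact one_le_pow₀ (by linarith)

theorem lt_mul_one_add_of_mul_pow_eq_one_add_pow (h : c * μ ^ n = (1 + μ) ^ k)
    (hδ : δ ^ n = c⁻¹) (hc : 0 < c) (hkn : k < n) (hμ : 0 < μ) (hδ0 : 0 ≤ δ) :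
    μ < δ * (1 + μ) := by
  refine lt_of_pow_lt_pow_left₀ n (by positivity) ?_
  rw [mul_pow, hδ, lt_inv_mul_iff₀ hc, h]
  exact pow_lt_pow_right₀ (by linarith) hkn

theorem lt_add_sq_div_one_sub_of_lt_mul_one_add (hδμ : δ ≤ μ) (hμ : μ < 1)
    (h : μ < δ * (1 + μ)) : μ < δ + δ ^ 2 / (1 - δ) := by
  have hδ : 0 < 1 - δ := by linarith
  have hsum : δ + δ ^ 2 / (1 - δ) = δ / (1 - δ) := by
    field_simp
    ring
  rw [hsum, lt_div_iff₀ hδ]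
  linarith

end RootBounds

theorem mu_bounds_general (p : ℕ) (r s : ℕ) (hr : 3 ≤ r) (hrs : r ≤ s)
    (μ : ℝ) (hμ : μ ∈ Set.Ioo (0 : ℝ) 1)
    (hμeq : (p : ℝ) ^ (s - 1) * μ ^ (r - 1) = (1 + μ) ^ (r - 3)) :
    (p : ℝ) ^ (-(((s : ℝ) - 1) / ((r : ℝ) - 1))) ≤ μ ∧
    μ < (p : ℝ) ^ (-(((s : ℝ) - 1) / ((r : ℝ) - 1))) +
        ((p : ℝ) ^ (-(((s : ℝ) - 1) / ((r : ℝ) - 1)))) ^ 2 /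
          (1 - (p : ℝ) ^ (-(((s : ℝ) - 1) / ((r : ℝ) - 1)))) := by
  obtain ⟨hμ0, hμ1⟩ := hμ
  set δ := (p : ℝ) ^ (-(((s : ℝ) - 1) / ((r : ℝ) - 1)))
  have hc : 0 < (p : ℝ) ^ (s - 1) := by
    refine pos_of_mul_pos_left (b := μ ^ (r - 1)) ?_ (by positivity)
    rw [hμeq]
    positivity
  have hδ : δ ^ (r - 1) = ((p : ℝ) ^ (s - 1))⁻¹ := by
    have h := rpow_neg_div_natCast_pow (Nat.cast_nonneg p) ((s - 1 : ℕ) : ℝ) (n := r - 1) (by omega)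
    rwa [Real.rpow_natCast, Nat.cast_sub (by omega), Nat.cast_sub (by omega), Nat.cast_one] at h
  have hδμ : δ ≤ μ := le_of_mul_pow_eq_one_add_pow hμeq hδ hc (by omega) hμ0.le
  exact ⟨hδμ, lt_add_sq_div_one_sub_of_lt_mul_one_add hδμ hμ1 <|
    lt_mul_one_add_of_mul_pow_eq_one_add_pow hμeq hδ hc (by omega) hμ0 (by positivity)⟩

theorem mu_bounds (p : ℕ) (hp : p.Prime) (r s : ℕ) (hr : 3 ≤ r) (hrs : r ≤ s)
    (μ : ℝ) (hμ : μ ∈ Set.Ioo (0 : ℝ) 1)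
    (hμeq : (p : ℝ) ^ (s - 1) * μ ^ (r - 1) = (1 + μ) ^ (r - 3)) :
    (p : ℝ) ^ (-(((s : ℝ) - 1) / ((r : ℝ) - 1))) ≤ μ ∧
    μ < (p : ℝ) ^ (-(((s : ℝ) - 1) / ((r : ℝ) - 1))) +
        ((p : ℝ) ^ (-(((s : ℝ) - 1) / ((r : ℝ) - 1)))) ^ 2 /
          (1 - (p : ℝ) ^ (-(((s : ℝ) - 1) / ((r : ℝ) - 1)))) :=
  mu_bounds_general p r s hr hrs μ hμ hμeq
end

section
/- Let p be a prime and 3 ≤ r ≤ s integers. Let ν̃ ∈ (0,1) be the unique solution of p^{s-1}·x^{r-1} = (1-x)², and let δ := p^{-(s-1)/(r-1)}. Then δ - δ²/(1+δ) ≤ ν̃ < δ ≤ 1/p. -/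
/-!
Write `c = p^(s-1)` and `m = r - 1 ≥ 2`, so that `δ` is the positive root of `c δ^m = 1` and `ν` the root
in `(0,1)` of `c x^m = (1-x)^2`. Since `c x^m - (1-x)^2` is strictly increasing on `[0,1]`, a point of `[0,1]`
lies below `ν` exactly when the function is nonpositive there. At `δ` it equals `1 - (1-δ)^2 > 0`, so `ν < δ`;
at `δ/(1+δ)` it equals `(1+δ)^(-m) - (1+δ)^(-2) ≤ 0`, so `δ/(1+δ) = δ - δ²/(1+δ) ≤ ν`.
Finally `δ ≤ 1/p` because the exponent `(s-1)/(r-1)` is at least `1`.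
-/

open Real

lemma pow_mul_rpow_neg_div_pow_eq_one {x : ℝ} (hx : 0 < x) (a : ℕ) {b : ℕ} (hb : b ≠ 0) :
    x ^ a * (x ^ (-((a : ℝ) / b))) ^ b = 1 := by
  rw [← rpow_natCast (x ^ _), ← rpow_mul hx.le, neg_mul, div_mul_cancel₀ _ (by exact_mod_cast hb),
    rpow_neg hx.le, rpow_natCast, mul_inv_cancel₀ (pow_pos hx a).ne']

lemma lt_of_mul_pow_eq_one_sub_sq {c δ ν : ℝ} {m : ℕ} (hc : 0 < c) (hδ : 0 ≤ δ)
    (hcδ : c * δ ^ m = 1) (hν : ν ∈ Set.Ioo (0 : ℝ) 1) (hcν : c * ν ^ m = (1 - ν) ^ 2) :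
    ν < δ := by
  obtain ⟨hν0, hν1⟩ := hν
  have : c * ν ^ m < c * δ ^ m := by rw [hcν, hcδ]; nlinarith
  exact lt_of_pow_lt_pow_left₀ m hδ (lt_of_mul_lt_mul_left this hc.le)

lemma le_of_mul_pow_le_one_sub_sq {c x ν : ℝ} {m : ℕ} (hm : m ≠ 0) (hc : 0 < c) (hν : 0 ≤ ν)
    (hx : x ≤ 1) (hcx : c * x ^ m ≤ (1 - x) ^ 2) (hcν : c * ν ^ m = (1 - ν) ^ 2) :
    x ≤ ν := by
  by_contra! hνx
  have hpow : c * ν ^ m < c * x ^ m := mul_lt_mul_of_pos_left (pow_lt_pow_left₀ hνx hν hm) hc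
  have hsq : (1 - x) ^ 2 < (1 - ν) ^ 2 := pow_lt_pow_left₀ (by linarith) (by linarith) two_ne_zero
  linarith

lemma mul_div_one_add_pow_le_one_sub_sq {c δ : ℝ} {m : ℕ} (hm : 2 ≤ m) (hδ : 0 ≤ δ)
    (hcδ : c * δ ^ m = 1) :
    c * (δ / (1 + δ)) ^ m ≤ (1 - δ / (1 + δ)) ^ 2 := by
  have h1δ : 0 < 1 + δ := by linarith
  have hsub : 1 - δ / (1 + δ) = 1 / (1 + δ) := by field_simp; ring
  rw [div_pow, ← mul_div_assoc, hcδ, hsub, div_pow, one_pow]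
  exact one_div_le_one_div_of_le (by positivity) (pow_le_pow_right₀ (by linarith) hm)

theorem nu_bounds (p : ℕ) (hp : p.Prime) (r s : ℕ) (hr : 3 ≤ r) (hrs : r ≤ s)
    (ν : ℝ) (hν : ν ∈ Set.Ioo (0 : ℝ) 1)
    (hνeq : (p : ℝ) ^ (s - 1) * ν ^ (r - 1) = (1 - ν) ^ 2) :
    (p : ℝ) ^ (-(((s : ℝ) - 1) / ((r : ℝ) - 1))) -
        ((p : ℝ) ^ (-(((s : ℝ) - 1) / ((r : ℝ) - 1)))) ^ 2 /
          (1 + (p : ℝ) ^ (-(((s : ℝ) - 1) / ((r : ℝ) - 1)))) ≤ ν ∧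
    ν < (p : ℝ) ^ (-(((s : ℝ) - 1) / ((r : ℝ) - 1))) ∧
    (p : ℝ) ^ (-(((s : ℝ) - 1) / ((r : ℝ) - 1))) ≤ 1 / (p : ℝ) := by
  have hp1 : (1 : ℝ) < p := by exact_mod_cast hp.one_lt
  have hm : r - 1 ≠ 0 := by omega
  rw [← Nat.cast_pred (by omega : 0 < s), ← Nat.cast_pred (by omega : 0 < r)]
  set δ := (p : ℝ) ^ (-(((s - 1 : ℕ) : ℝ) / ((r - 1 : ℕ) : ℝ)))
  have hδ : 0 < δ := by positivity
  have hc : (0 : ℝ) < p ^ (s - 1) := by positivity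
  have hcδ : (p : ℝ) ^ (s - 1) * δ ^ (r - 1) = 1 :=
    pow_mul_rpow_neg_div_pow_eq_one (by linarith) _ hm
  have hlower : δ - δ ^ 2 / (1 + δ) = δ / (1 + δ) := by field_simp; ring
  have hexp : (1 : ℝ) ≤ ((s - 1 : ℕ) : ℝ) / ((r - 1 : ℕ) : ℝ) :=
    (one_le_div (by exact_mod_cast Nat.pos_of_ne_zero hm)).mpr (by exact_mod_cast (by omega : r - 1 ≤ s - 1))
  refine ⟨?_, lt_of_mul_pow_eq_one_sub_sq hc hδ.le hcδ hν hνeq, ?_⟩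
  · rw [hlower]
    refine le_of_mul_pow_le_one_sub_sq hm hc hν.1.le ?_
      (mul_div_one_add_pow_le_one_sub_sq (by omega) hδ.le hcδ) hνeq
    exact (div_le_one (by linarith)).mpr (by linarith)
  · calc δ ≤ (p : ℝ) ^ (-1 : ℝ) := rpow_le_rpow_of_exponent_le hp1.le (by linarith)
      _ = 1 / p := by rw [rpow_neg_one, one_div]
end
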